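/- arXiv:1712.03698 — 5 statements merged into one kernel-verified Lean document; each statement's English description precedes it below -/
import Mathlib

section
/- Let (A_n) be a sequence of d×d complex matrices such that the Cesàro means (1/n)·Σ_{k=0}^{n-1} A_k converge to a matrix A, and such that the sequence ((1/n)·Σ_{k=0}^{n} ‖A_k‖)_{n≥1} is bounded (for some fixed matrix norm). Then for every complex number t, the product Π_n(t) = (I_d + (t/n)A_0)(I_d + (t/n)A_1)⋯(I_d + (t/n)A_n) converges, as n → ∞, to the matrix exponential exp(tA). -/
/-!
Put `B_k = 1 + (t/n) A_k` and `E = 1 + (t/n) A`. Since `E ^ (n+1) → exp (t A)`, it suffices that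
`B_0 ⋯ B_n - E ^ (n+1) → 0`. Telescoping writes this difference as
`∑ m, B_0 ⋯ B_{m-1} (B_m - E) E ^ (n-m)`, and summation by parts trades the differences
`B_m - E = (t/n) (A_m - A)` for their partial sums `(t/n) T_{m+1}`, `T_m = ∑_{j<m} (A_j - A)`,
which are `o(m)` by the Cesàro hypothesis. The bound on the Cesàro means of `‖A_k‖` keeps all
partial products `B_0 ⋯ B_{m-1}` below `exp (‖t‖ α)`, so the difference is
`O(‖T_{n+1}‖ / n + n⁻² ∑_{m<n} ‖T_{m+1}‖ (‖A‖ + ‖A_m‖)) = o(1)`.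
-/

open Filter Topology

attribute [local instance] Matrix.linftyOpNormedAddCommGroup Matrix.linftyOpNormedRing

open Finset Asymptotics

section Ring

variable {R : Type*} [Ring R]

theorem List.prod_map_range_succ (B : ℕ → R) (n : ℕ) :
    ((List.range (n + 1)).map B).prod = ((List.range n).map B).prod * B n := by
  rw [List.range_succ, List.map_append, List.prod_append, List.map_singleton,
    List.prod_singleton]

theorem list_prod_sub_pow_eq (B : ℕ → R) (E : R) (N : ℕ) :
    ((List.range (N + 1)).map B).prod - E ^ (N + 1) =
      ((List.range N).map B).prod * ∑ j ∈ range (N + 1), (B j - E) +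
        ∑ m ∈ range N, ((List.range m).map B).prod *
          ((∑ j ∈ range (m + 1), (B j - E)) * E - B m * ∑ j ∈ range (m + 1), (B j - E)) *
            E ^ (N - 1 - m) := by
  induction N with
  | zero => simp
  | succ N ih =>
    have hlast : ∑ m ∈ range (N + 1), ((List.range m).map B).prod *
          ((∑ j ∈ range (m + 1), (B j - E)) * E - B m * ∑ j ∈ range (m + 1), (B j - E)) *
            E ^ (N + 1 - 1 - m) =
        (∑ m ∈ range N, ((List.range m).map B).prod *
          ((∑ j ∈ range (m + 1), (B j - E)) * E - B m * ∑ j ∈ range (m + 1), (B j - E)) *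
            E ^ (N - 1 - m)) * E + ((List.range N).map B).prod *
          ((∑ j ∈ range (N + 1), (B j - E)) * E - B N * ∑ j ∈ range (N + 1), (B j - E)) := by
      rw [sum_range_succ, Nat.add_sub_cancel, Nat.sub_self, pow_zero, mul_one, sum_mul (range N)]
      congr 1
      refine sum_congr rfl fun m hm => ?_
      rw [mul_assoc _ (E ^ _), ← pow_succ]
      congr 2
      have := mem_range.1 hm
      omega
    rw [hlast, List.prod_map_range_succ B (N + 1), List.prod_map_range_succ B N,
      sum_range_succ _ (N + 1), pow_succ, ← List.prod_map_range_succ B N]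
    calc _ = (((List.range (N + 1)).map B).prod - E ^ (N + 1)) * E +
          ((List.range (N + 1)).map B).prod * (B (N + 1) - E) := by noncomm_ring
      _ = _ := by rw [ih, List.prod_map_range_succ B N]; noncomm_ring

end Ring

section NormedRing

variable {𝔸 : Type*} [NormedRing 𝔸]

theorem norm_list_prod_sub_pow_le (B : ℕ → 𝔸) (E : 𝔸) (N : ℕ) {P Q : ℝ}
    (hP : ∀ m ≤ N, ‖((List.range m).map B).prod‖ ≤ P) (hQ : ∀ j ≤ N, ‖E ^ j‖ ≤ Q) :
    ‖((List.range (N + 1)).map B).prod - E ^ (N + 1)‖ ≤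
      P * ‖∑ j ∈ range (N + 1), (B j - E)‖ +
        P * Q * ∑ m ∈ range N, ‖∑ j ∈ range (m + 1), (B j - E)‖ * (‖E - 1‖ + ‖B m - 1‖) := by
  rw [list_prod_sub_pow_eq]
  refine (norm_add_le _ _).trans (add_le_add ?_ ?_)
  · exact (norm_mul_le _ _).trans (mul_le_mul_of_nonneg_right (hP N le_rfl) (norm_nonneg _))
  · rw [mul_sum]
    refine (norm_sum_le _ _).trans (sum_le_sum fun m hm => ?_)
    have hm := mem_range.1 hm
    set S := ∑ j ∈ range (m + 1), (B j - E)
    have hX : ‖S * E - B m * S‖ ≤ ‖S‖ * (‖E - 1‖ + ‖B m - 1‖) := by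
      rw [show S * E - B m * S = S * (E - 1) - (B m - 1) * S by noncomm_ring, mul_add]
      refine (norm_sub_le _ _).trans (add_le_add (norm_mul_le _ _) ?_)
      exact (norm_mul_le _ _).trans_eq (mul_comm _ _)
    have hP0 : 0 ≤ P := (norm_nonneg _).trans (hP 0 (Nat.zero_le _))
    calc _ ≤ ‖((List.range m).map B).prod‖ * ‖S * E - B m * S‖ * ‖E ^ (N - 1 - m)‖ :=
          norm_mul₃_le
      _ ≤ P * (‖S‖ * (‖E - 1‖ + ‖B m - 1‖)) * Q := by
          gcongr
          exacts [hP m hm.le, hQ _ (by omega)]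
      _ = _ := by ring

variable [NormOneClass 𝔸]

theorem norm_list_prod_range_one_add_le (x : ℕ → 𝔸) (m : ℕ) :
    ‖((List.range m).map fun k => 1 + x k).prod‖ ≤ Real.exp (∑ k ∈ range m, ‖x k‖) := by
  induction m with
  | zero => simp
  | succ m ih =>
    rw [List.prod_map_range_succ, sum_range_succ, Real.exp_add]
    refine (norm_mul_le _ _).trans (mul_le_mul ih ?_ (norm_nonneg _) (Real.exp_nonneg _))
    exact (norm_add_le _ _).trans (by rw [norm_one]; linarith [Real.add_one_le_exp ‖x m‖])

theorem norm_one_add_pow_le (x : 𝔸) (j : ℕ) : ‖(1 + x) ^ j‖ ≤ Real.exp (j * ‖x‖) := by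
  simpa using norm_list_prod_range_one_add_le (fun _ => x) j

end NormedRing

theorem choose_mul_inv_pow_le_inv_factorial (n k : ℕ) :
    (n.choose k : ℝ) * ((n : ℝ)⁻¹) ^ k ≤ (k.factorial : ℝ)⁻¹ :=
  calc (n.choose k : ℝ) * ((n : ℝ)⁻¹) ^ k ≤ n ^ k / k.factorial * ((n : ℝ)⁻¹) ^ k := by
        gcongr
        exact Nat.choose_le_pow_div k n
    _ = ((n : ℝ) * (n : ℝ)⁻¹) ^ k * (k.factorial : ℝ)⁻¹ := by ring
    _ ≤ (k.factorial : ℝ)⁻¹ :=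
        mul_le_of_le_one_left (by positivity) (pow_le_one₀ (by positivity) mul_inv_le_one)

section NormedAlgebra

variable {𝕂 𝔸 : Type*} [RCLike 𝕂] [NormedRing 𝔸] [NormedAlgebra 𝕂 𝔸]

theorem one_add_smul_pow_eq_tsum (c : ℝ) (x : 𝔸) (n : ℕ) :
    (1 + (c : 𝕂) • x) ^ n = ∑' k, ((n.choose k * c ^ k : ℝ) : 𝕂) • x ^ k := by
  rw [tsum_eq_sum (s := range (n + 1)), add_comm, (Commute.one_right _).add_pow]
  · refine sum_congr rfl fun k _ => ?_
    rw [one_pow, mul_one, ← Nat.cast_comm, ← nsmul_eq_mul, ← Nat.cast_smul_eq_nsmul 𝕂, smul_pow,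
      smul_smul]
    push_cast
    rfl
  · intro k hk
    rw [Nat.choose_eq_zero_of_lt (by simpa using hk)]
    simp

variable [NormOneClass 𝔸]

theorem tendsto_one_add_inv_smul_pow_exp [CompleteSpace 𝔸] (x : 𝔸) :
    Tendsto (fun n : ℕ => (1 + (n : 𝕂)⁻¹ • x) ^ n) atTop (𝓝 (NormedSpace.exp x)) := by
  have hcoe : ∀ n : ℕ, ((n : 𝕂))⁻¹ = (((n : ℝ)⁻¹ : ℝ) : 𝕂) := by simp
  simp only [hcoe, one_add_smul_pow_eq_tsum, NormedSpace.exp_eq_tsum 𝕂]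
  refine tendsto_tsum_of_dominated_convergence (bound := fun k => ‖x‖ ^ k / k.factorial)
    (Real.summable_pow_div_factorial _) (fun k => ?_) (Eventually.of_forall fun n k => ?_)
  · have hlim : Tendsto (fun n : ℕ => n.choose k * ((n : ℝ)⁻¹) ^ k) atTop
        (𝓝 (1 ^ k / k.factorial)) := by
      refine ProbabilityTheory.tendsto_choose_mul_pow_atTop k (tendsto_const_nhds.congr' ?_)
      filter_upwards [eventually_ne_atTop 0] with n hn
      field_simp
    have := ((RCLike.continuous_ofReal (K := 𝕂)).tendsto _).comp hlim
    simpa [Function.comp_def] using this.smul_const (x ^ k)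
  · rw [norm_smul, RCLike.norm_ofReal, div_eq_inv_mul, abs_of_nonneg (by positivity)]
    exact mul_le_mul (choose_mul_inv_pow_le_inv_factorial n k) (norm_pow_le _ _) (norm_nonneg _)
      (by positivity)

theorem norm_list_prod_one_add_smul_sub_pow_le (A : ℕ → 𝔸) (a : 𝔸) (z : 𝕂) (N : ℕ) :
    ‖((List.range (N + 1)).map fun k => 1 + z • A k).prod - (1 + z • a) ^ (N + 1)‖ ≤
      Real.exp (‖z‖ * ∑ k ∈ range (N + 1), ‖A k‖) *
        (‖z‖ * ‖∑ j ∈ range (N + 1), (A j - a)‖ + Real.exp (N * (‖z‖ * ‖a‖)) * ‖z‖ ^ 2 *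
          ∑ m ∈ range N, ‖∑ j ∈ range (m + 1), (A j - a)‖ * (‖a‖ + ‖A m‖)) := by
  have hP : ∀ m ≤ N, ‖((List.range m).map fun k => 1 + z • A k).prod‖ ≤
      Real.exp (‖z‖ * ∑ k ∈ range (N + 1), ‖A k‖) := fun m hm => by
    refine (norm_list_prod_range_one_add_le _ m).trans (Real.exp_le_exp.2 ?_)
    simp only [norm_smul, ← mul_sum]
    gcongr
    omega
  have hQ : ∀ j ≤ N, ‖(1 + z • a) ^ j‖ ≤ Real.exp (N * (‖z‖ * ‖a‖)) := fun j hj => by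
    refine (norm_one_add_pow_le _ j).trans (Real.exp_le_exp.2 ?_)
    rw [norm_smul]
    gcongr
  have hS : ∀ m, ∑ j ∈ range m, ((1 + z • A j) - (1 + z • a)) = z • ∑ j ∈ range m, (A j - a) :=
    fun m => by simp only [add_sub_add_left_eq_sub, ← smul_sub, smul_sum]
  refine (norm_list_prod_sub_pow_le _ _ N hP hQ).trans_eq ?_
  simp only [hS, norm_smul, add_sub_cancel_left, mul_add, mul_sum]
  exact congrArg _ (sum_congr rfl fun m _ => by ring)

theorem norm_list_prod_one_add_div_smul_sub_pow_le (A : ℕ → 𝔸) (a : 𝔸) (t : 𝕂) {n : ℕ}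
    (hn : 1 ≤ n) {α : ℝ} (hα : (n : ℝ)⁻¹ * ∑ k ∈ range (n + 1), ‖A k‖ ≤ α) :
    ‖((List.range (n + 1)).map fun k => 1 + (t / n) • A k).prod - (1 + (t / n) • a) ^ (n + 1)‖ ≤
      Real.exp (‖t‖ * α) * (‖t‖ * (‖∑ j ∈ range (n + 1), (A j - a)‖ / n) +
        Real.exp (‖t‖ * ‖a‖) * ‖t‖ ^ 2 *
          ((∑ m ∈ range n, ‖∑ j ∈ range (m + 1), (A j - a)‖ * (‖a‖ + ‖A m‖)) / (n : ℝ) ^ 2)) := by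
  have hn0 : (n : ℝ) ≠ 0 := by positivity
  refine (norm_list_prod_one_add_smul_sub_pow_le A a (t / n) n).trans ?_
  rw [norm_div, RCLike.norm_natCast, show (n : ℝ) * (‖t‖ / n * ‖a‖) = ‖t‖ * ‖a‖ by field_simp]
  have hexp : ‖t‖ / n * ∑ k ∈ range (n + 1), ‖A k‖ ≤ ‖t‖ * α := by
    rw [div_mul_eq_mul_div, mul_div_assoc, div_eq_inv_mul]
    exact mul_le_mul_of_nonneg_left hα (norm_nonneg t)
  calc _ ≤ Real.exp (‖t‖ * α) * (‖t‖ / n * ‖∑ j ∈ range (n + 1), (A j - a)‖ +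
        Real.exp (‖t‖ * ‖a‖) * (‖t‖ / n) ^ 2 *
          ∑ m ∈ range n, ‖∑ j ∈ range (m + 1), (A j - a)‖ * (‖a‖ + ‖A m‖)) := by gcongr
    _ = _ := by ring

end NormedAlgebra

theorem isBigO_natCast_add_one :
    (fun m : ℕ => ((m + 1 : ℕ) : ℝ)) =O[atTop] (fun m => (m : ℝ)) := by
  refine IsBigO.of_bound 2 ((eventually_ge_atTop 1).mono fun m hm => ?_)
  have : (1 : ℝ) ≤ m := by exact_mod_cast hm
  rw [Real.norm_natCast, Real.norm_natCast, Nat.cast_add, Nat.cast_one]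
  linarith

theorem isLittleO_sum_sub_of_tendsto_cesaro {𝕂 E : Type*} [RCLike 𝕂] [NormedAddCommGroup E]
    [NormedSpace 𝕂 E] {A : ℕ → E} {a : E}
    (h : Tendsto (fun n : ℕ => (n : 𝕂)⁻¹ • ∑ k ∈ range n, A k) atTop (𝓝 a)) :
    (fun n => ∑ k ∈ range n, (A k - a)) =o[atTop] (fun n => (n : ℝ)) := by
  have hmean : (fun n : ℕ => (n : 𝕂)⁻¹ • ∑ k ∈ range n, A k - a) =o[atTop] (fun _ => (1 : ℝ)) :=
    (isLittleO_one_iff ℝ).2 (tendsto_sub_nhds_zero_iff.2 h)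
  have hn : (fun n : ℕ => (n : 𝕂)) =O[atTop] (fun n => (n : ℝ)) :=
    isBigO_of_le _ fun n => by simp
  refine (hn.smul_isLittleO hmean).congr' ?_ (by simp)
  filter_upwards [eventually_ne_atTop 0] with n hn
  rw [smul_sub, smul_smul, mul_inv_cancel₀ (Nat.cast_ne_zero.2 hn), one_smul, sum_sub_distrib,
    sum_const, card_range, Nat.cast_smul_eq_nsmul]

theorem isLittleO_sum_mul_of_isLittleO {u w : ℕ → ℝ} (hu : u =o[atTop] (fun m => (m : ℝ)))
    (hw : ∀ m, 0 ≤ w m) {C : ℝ} (hC : ∀ n, ∑ m ∈ range n, w m ≤ C * n) :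
    (fun n => ∑ m ∈ range n, u m * w m) =o[atTop] (fun n => (n : ℝ) ^ 2) := by
  -- `u * w = o(g)`, and the partial sums of `g` tend to infinity but are `O(n²)`.
  set g : ℕ → ℝ := fun m => ((m : ℝ) + 1) * (w m + 1)
  have hg : 0 ≤ g := fun m => mul_nonneg (by positivity) (by linarith [hw m])
  have hug : (fun m => u m * w m) =o[atTop] g := by
    refine (hu.trans_isBigO (isBigO_of_le _ fun m => ?_)).mul_isBigO (isBigO_of_le _ fun m => ?_)
    · simp [abs_of_nonneg (by positivity : (0 : ℝ) ≤ m + 1)]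
    · simp [abs_of_nonneg (hw m), abs_of_nonneg (by linarith [hw m] : (0 : ℝ) ≤ w m + 1)]
  have hg_sum : ∀ n, ∑ m ∈ range n, g m ≤ (C + 1) * (n : ℝ) ^ 2 := fun n => by
    calc ∑ m ∈ range n, g m ≤ ∑ m ∈ range n, (n : ℝ) * (w m + 1) :=
          sum_le_sum fun m hm => mul_le_mul_of_nonneg_right
            (by exact_mod_cast mem_range.1 hm) (by linarith [hw m])
      _ = n * (∑ m ∈ range n, w m + n) := by simp [← mul_sum, sum_add_distrib]
      _ ≤ n * (C * n + n) := by gcongr; exact hC n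
      _ = (C + 1) * (n : ℝ) ^ 2 := by ring
  have hg_top : Tendsto (fun n => ∑ m ∈ range n, g m) atTop atTop := by
    refine tendsto_atTop_mono (fun n => ?_) tendsto_natCast_atTop_atTop
    calc (n : ℝ) = ∑ m ∈ range n, (1 : ℝ) := by simp
      _ ≤ ∑ m ∈ range n, g m := sum_le_sum fun m _ =>
            one_le_mul_of_one_le_of_one_le (by simp) (by linarith [hw m])
  refine (hug.sum_range hg hg_top).trans_isBigO (IsBigO.of_bound (C + 1) ?_)
  refine Eventually.of_forall fun n => ?_
  rw [Real.norm_of_nonneg (sum_nonneg fun m _ => hg m), Real.norm_of_nonneg (by positivity)]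
  exact hg_sum n

theorem tendsto_list_prod_one_add_div_smul {𝕂 𝔸 : Type*} [RCLike 𝕂] [NormedRing 𝔸]
    [NormedAlgebra 𝕂 𝔸] [NormOneClass 𝔸] [CompleteSpace 𝔸] (A : ℕ → 𝔸) (a : 𝔸)
    (hCesaro : Tendsto (fun n : ℕ => (n : 𝕂)⁻¹ • ∑ k ∈ range n, A k) atTop (𝓝 a)) (α : ℝ)
    (hBdd : ∀ n : ℕ, 1 ≤ n → (n : ℝ)⁻¹ * ∑ k ∈ range (n + 1), ‖A k‖ ≤ α) (t : 𝕂) :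
    Tendsto (fun n : ℕ => ((List.range (n + 1)).map fun k => 1 + (t / n) • A k).prod) atTop
      (𝓝 (NormedSpace.exp (t • a))) := by
  set T : ℕ → 𝔸 := fun m => ∑ j ∈ range m, (A j - a)
  have hT : (fun m => ‖T (m + 1)‖) =o[atTop] (fun m => (m : ℝ)) :=
    (((isLittleO_sum_sub_of_tendsto_cesaro hCesaro).comp_tendsto
      (tendsto_add_atTop_nat 1)).trans_isBigO isBigO_natCast_add_one).norm_left
  have hw : ∀ n : ℕ, ∑ m ∈ range n, (‖a‖ + ‖A m‖) ≤ (‖a‖ + α) * n := fun n => by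
    rcases Nat.eq_zero_or_pos n with rfl | hn
    · simp
    have hsum : ∑ m ∈ range n, ‖A m‖ ≤ α * n := by
      have := (inv_mul_le_iff₀ (by exact_mod_cast hn)).1 (hBdd n hn)
      refine le_trans ?_ (this.trans_eq (mul_comm _ _))
      exact sum_le_sum_of_subset_of_nonneg (range_subset_range.2 (by omega))
        fun k _ _ => norm_nonneg (A k)
    rw [sum_add_distrib, sum_const, card_range, nsmul_eq_mul]
    linarith
  have hbound : ∀ᶠ n : ℕ in atTop,
      ‖((List.range (n + 1)).map fun k => 1 + (t / n) • A k).prod - (1 + (t / n) • a) ^ (n + 1)‖ ≤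
        Real.exp (‖t‖ * α) * (‖t‖ * (‖T (n + 1)‖ / n) + Real.exp (‖t‖ * ‖a‖) * ‖t‖ ^ 2 *
          ((∑ m ∈ range n, ‖T (m + 1)‖ * (‖a‖ + ‖A m‖)) / (n : ℝ) ^ 2)) :=
    (eventually_ge_atTop 1).mono fun n hn =>
      norm_list_prod_one_add_div_smul_sub_pow_le A a t hn (hBdd n hn)
  have hlim : Tendsto (fun n : ℕ => Real.exp (‖t‖ * α) * (‖t‖ * (‖T (n + 1)‖ / n) +
      Real.exp (‖t‖ * ‖a‖) * ‖t‖ ^ 2 *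
        ((∑ m ∈ range n, ‖T (m + 1)‖ * (‖a‖ + ‖A m‖)) / (n : ℝ) ^ 2))) atTop (𝓝 0) := by
    have hsum :=
      (isLittleO_sum_mul_of_isLittleO hT (fun m => by positivity) hw).tendsto_div_nhds_zero
    simpa using ((hT.tendsto_div_nhds_zero.const_mul ‖t‖).add
      (hsum.const_mul (Real.exp (‖t‖ * ‖a‖) * ‖t‖ ^ 2))).const_mul (Real.exp (‖t‖ * α))
  have hpow : Tendsto (fun n : ℕ => (1 + (t / n) • a) ^ (n + 1)) atTop
      (𝓝 (NormedSpace.exp (t • a))) := by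
    have hfactor : Tendsto (fun n : ℕ => 1 + (t / n) • a) atTop (𝓝 1) := by
      simpa using ((tendsto_const_div_atTop_nhds_zero_nat t).smul_const a).const_add (1 : 𝔸)
    have := (tendsto_one_add_inv_smul_pow_exp (𝕂 := 𝕂) (t • a)).mul hfactor
    rw [mul_one] at this
    refine this.congr fun n => ?_
    rw [pow_succ, smul_smul, div_eq_inv_mul]
  simpa using (squeeze_zero_norm' hbound hlim).add hpow

/-- For a sequence of `d × d` complex matrices whose Cesàro means converge to `A` and whose
norms have bounded Cesàro means, the products `(I + (t/n) A₀) ⋯ (I + (t/n) Aₙ)` converge to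
`exp (t A)`. -/
theorem statement0 {d : ℕ} (A : ℕ → Matrix (Fin d) (Fin d) ℂ) (Alim : Matrix (Fin d) (Fin d) ℂ)
    (hCesaro : Tendsto (fun n : ℕ => ((n : ℂ)⁻¹) • ∑ k ∈ Finset.range n, A k)
      atTop (𝓝 Alim))
    (α : ℝ)
    (hBdd : ∀ n : ℕ, 1 ≤ n → (n : ℝ)⁻¹ * ∑ k ∈ Finset.range (n + 1), ‖A k‖ ≤ α)
    (t : ℂ) :
    Tendsto
      (fun n : ℕ =>
        ((List.range (n + 1)).map (fun k => (1 : Matrix (Fin d) (Fin d) ℂ) + (t / n) • A k)).prod)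
      atTop (𝓝 (NormedSpace.exp (t • Alim))) := by
  rcases isEmpty_or_nonempty (Fin d) with _ | _
  · exact tendsto_const_nhds.congr fun n => Subsingleton.elim _ _
  let _ : NormedAlgebra ℂ (Matrix (Fin d) (Fin d) ℂ) := Matrix.linftyOpNormedAlgebra
  exact tendsto_list_prod_one_add_div_smul A Alim hCesaro α hBdd t
end

section
/- Let (u_n) be a bounded sequence of complex numbers whose Cesàro means (1/n)·Σ_{k=0}^{n-1} u_k converge to a limit l. Then the product Π_{k=0}^{n-1} (1 + u_k/n) converges to e^l as n → ∞. -/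
open Filter Topology Finset

/-!
Eventually every factor `1 + uₖ/n` lies in the disc `‖z - 1‖ ≤ 1/2`, so the product is the
exponential of `∑ₖ log (1 + uₖ/n)`. Since `log (1 + z) = z + O(‖z‖²)`, this sum differs from the
Cesàro mean `∑ₖ uₖ/n` by `O(n · (C/n)²) = O(C²/n)`, hence also tends to `l`.
-/

namespace Complex

lemma norm_log_one_add_sub_self_le_sq {z : ℂ} (hz : ‖z‖ ≤ 1 / 2) :
    ‖log (1 + z) - z‖ ≤ ‖z‖ ^ 2 := by
  have hz_lt : ‖z‖ < 1 := hz.trans_lt one_half_lt_one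
  have hinv : (1 - ‖z‖)⁻¹ ≤ 2 := by
    rw [inv_le_comm₀ (by linarith) two_pos]
    linarith
  calc ‖log (1 + z) - z‖ ≤ ‖z‖ ^ 2 * (1 - ‖z‖)⁻¹ / 2 := norm_log_one_add_sub_self_le hz_lt
    _ ≤ ‖z‖ ^ 2 * 2 / 2 := by gcongr
    _ = ‖z‖ ^ 2 := by ring

lemma prod_eq_exp_sum_log {ι : Type*} (s : Finset ι) {w : ι → ℂ} (hw : ∀ k ∈ s, w k ≠ 0) :
    ∏ k ∈ s, w k = exp (∑ k ∈ s, log (w k)) := by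
  rw [exp_sum]
  exact prod_congr rfl fun k hk => (exp_log (hw k hk)).symm

lemma norm_sum_log_one_add_sub_sum_le {ι : Type*} (s : Finset ι) {z : ι → ℂ}
    (hz : ∀ k ∈ s, ‖z k‖ ≤ 1 / 2) :
    ‖∑ k ∈ s, log (1 + z k) - ∑ k ∈ s, z k‖ ≤ ∑ k ∈ s, ‖z k‖ ^ 2 := by
  rw [← sum_sub_distrib]
  exact (norm_sum_le _ _).trans <| sum_le_sum fun k hk => norm_log_one_add_sub_self_le_sq (hz k hk)

theorem tendsto_prod_one_add_of_tendsto_sum {z : ℕ → ℕ → ℂ} {l : ℂ} {C : ℝ}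
    (hz : ∀ n, ∀ k < n, ‖z n k‖ ≤ C / n)
    (hsum : Tendsto (fun n => ∑ k ∈ range n, z n k) atTop (𝓝 l)) :
    Tendsto (fun n => ∏ k ∈ range n, (1 + z n k)) atTop (𝓝 (exp l)) := by
  have hC_div : Tendsto (fun n : ℕ => C / n) atTop (𝓝 0) :=
    tendsto_const_nhds.div_atTop tendsto_natCast_atTop_atTop
  have hsmall : ∀ᶠ n : ℕ in atTop, ∀ k ∈ range n, ‖z n k‖ ≤ 1 / 2 := by
    filter_upwards [hC_div.eventually (ge_mem_nhds one_half_pos)] with n hn k hk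
    exact (hz n k (mem_range.mp hk)).trans hn
  have hlog_sum : Tendsto (fun n => ∑ k ∈ range n, log (1 + z n k)) atTop (𝓝 l) := by
    have hC_sq : Tendsto (fun n : ℕ => C ^ 2 / n) atTop (𝓝 0) :=
      tendsto_const_nhds.div_atTop tendsto_natCast_atTop_atTop
    have hdiff : Tendsto (fun n => ∑ k ∈ range n, log (1 + z n k) - ∑ k ∈ range n, z n k)
        atTop (𝓝 0) := by
      refine squeeze_zero_norm' ?_ hC_sq
      filter_upwards [hsmall] with n hn
      calc _ ≤ ∑ k ∈ range n, ‖z n k‖ ^ 2 := norm_sum_log_one_add_sub_sum_le _ hn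
        _ ≤ ∑ _k ∈ range n, (C / n) ^ 2 := sum_le_sum fun k hk =>
            pow_le_pow_left₀ (norm_nonneg _) (hz n k (mem_range.mp hk)) 2
        _ = C ^ 2 / n := by
            rw [sum_const, card_range, nsmul_eq_mul]
            rcases n.eq_zero_or_pos with rfl | hn
            · simp
            · field_simp
    simpa using hdiff.add hsum
  have hprod : ∀ᶠ n : ℕ in atTop,
      exp (∑ k ∈ range n, log (1 + z n k)) = ∏ k ∈ range n, (1 + z n k) := by
    filter_upwards [hsmall] with n hn
    refine (prod_eq_exp_sum_log _ fun k hk h => ?_).symm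
    have : ‖z n k‖ = 1 := by rw [eq_neg_of_add_eq_zero_right h, norm_neg, norm_one]
    linarith [hn k hk]
  exact ((continuous_exp.tendsto l).comp hlog_sum).congr' hprod

end Complex

/-- If `(uₙ)` is a bounded complex sequence whose Cesàro means converge to `l`, then
`∏_{k=0}^{n-1} (1 + uₖ/n)` converges to `e^l`. -/
theorem statement1 (u : ℕ → ℂ) (l : ℂ)
    (hBdd : ∃ C : ℝ, ∀ n : ℕ, ‖u n‖ ≤ C)
    (hCesaro : Tendsto (fun n : ℕ => ((n : ℂ)⁻¹) * ∑ k ∈ Finset.range n, u k)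
      atTop (𝓝 l)) :
    Tendsto (fun n : ℕ => ∏ k ∈ Finset.range n, (1 + u k / n)) atTop (𝓝 (Complex.exp l)) := by
  obtain ⟨C, hC⟩ := hBdd
  refine Complex.tendsto_prod_one_add_of_tendsto_sum (C := C) (fun n k _ => ?_) ?_
  · rw [norm_div, Complex.norm_natCast]
    exact div_le_div_of_nonneg_right (hC k) n.cast_nonneg
  · simpa only [div_eq_inv_mul, ← mul_sum] using hCesaro
end

section
/- Let (u_n) be a sequence of d×d complex matrices whose Cesàro means (1/n)·Σ_{l=0}^{n-1} u_l converge to a matrix L, and let g : ℝ → ℝ be continuously differentiable. Then (1/n)·Σ_{l=0}^{n-1} g(l/n)·u_l converges, as n → ∞, to L·∫_0^1 g(t) dt. -/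
/-!
Writing `v l = u l - L`, the weighted mean splits into `(1/n) ∑ g(l/n) • v l` plus the Riemann
sum `(1/n) ∑ g(l/n)` times `L`; the Riemann sum tends to `∫₀¹ g` because `g` is Lipschitz on
`[0,1]`. Summation by parts against the partial sums `T m = ∑_{l<m} v l`, which are `o(m)`,
bounds the first part by `sup |g| · ‖T n‖/n + K · (1/n) ∑_{m ≤ n} ‖T m‖/m` for a Lipschitz
constant `K` of `g`, and both terms tend to `0`, the second by Cesàro.
-/

open Filter Topology Finset Set MeasureTheory
open scoped NNReal

theorem natCast_div_mem_Icc {l n : ℕ} (hl : l ≤ n) : (l : ℝ) / n ∈ Icc (0 : ℝ) 1 :=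
  ⟨by positivity, div_le_one_of_le₀ (by exact_mod_cast hl) n.cast_nonneg⟩

theorem natCast_succ_div_sub_div (l n : ℕ) : ((l + 1 : ℕ) : ℝ) / n - l / n = (n : ℝ)⁻¹ := by
  rw [Nat.cast_succ, ← _root_.sub_div, add_sub_cancel_left, one_div]

theorem LipschitzOnWith.dist_apply_succ_div_le {g : ℝ → ℝ} {K : ℝ≥0}
    (hg : LipschitzOnWith K g (Icc 0 1)) {l n : ℕ} (hl : l + 1 ≤ n) :
    dist (g ((l + 1 : ℕ) / n)) (g (l / n)) ≤ K / n := by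
  refine (hg.dist_le_mul _ (natCast_div_mem_Icc hl) _
    (natCast_div_mem_Icc (by omega))).trans_eq ?_
  rw [Real.dist_eq, natCast_succ_div_sub_div, abs_of_nonneg (by positivity), div_eq_mul_inv]

theorem LipschitzOnWith.norm_inv_mul_sub_integral_le {g : ℝ → ℝ} {K : ℝ≥0}
    (hg : LipschitzOnWith K g (Icc 0 1)) {l n : ℕ} (hl : l < n) :
    ‖(n : ℝ)⁻¹ * g (l / n) - ∫ t in (l / n : ℝ)..((l + 1 : ℕ) / n), g t‖ ≤ K / n ^ 2 := by
  have hn0 : (0 : ℝ) < n := by exact_mod_cast (Nat.zero_le l).trans_lt hl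
  have hwidth := natCast_succ_div_sub_div l n
  have hle : (l : ℝ) / n ≤ (l + 1 : ℕ) / n := by linarith [inv_pos.2 hn0]
  have hlipschitz : ∀ x ∈ uIoc ((l : ℝ) / n) ((l + 1 : ℕ) / n), ‖g (l / n) - g x‖ ≤ K / n := by
    intro x hx
    rw [uIoc_of_le hle] at hx
    have hx01 : x ∈ Icc (0 : ℝ) 1 :=
      ⟨(natCast_div_mem_Icc hl.le).1.trans hx.1.le, hx.2.trans (natCast_div_mem_Icc hl).2⟩
    rw [← dist_eq_norm, dist_comm]
    refine (hg.dist_le_mul _ hx01 _ (natCast_div_mem_Icc hl.le)).trans ?_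
    rw [Real.dist_eq, abs_of_nonneg (by linarith [hx.1]), div_eq_mul_inv (K : ℝ), ← hwidth]
    gcongr
    linarith [hx.2]
  rw [← hwidth, ← smul_eq_mul, ← intervalIntegral.integral_const,
    ← intervalIntegral.integral_sub intervalIntegrable_const
      ((hg.continuousOn.mono (uIcc_subset_Icc (natCast_div_mem_Icc hl.le)
        (natCast_div_mem_Icc hl))).intervalIntegrable)]
  refine (intervalIntegral.norm_integral_le_of_norm_le_const hlipschitz).trans_eq ?_
  rw [hwidth, abs_of_pos (inv_pos.2 hn0)]
  field_simp

theorem LipschitzOnWith.tendsto_riemannSum {g : ℝ → ℝ} {K : ℝ≥0}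
    (hg : LipschitzOnWith K g (Icc 0 1)) :
    Tendsto (fun n : ℕ => (n : ℝ)⁻¹ * ∑ l ∈ range n, g (l / n)) atTop
      (𝓝 (∫ t in (0 : ℝ)..1, g t)) := by
  rw [← tendsto_sub_nhds_zero_iff]
  refine squeeze_zero_norm' ?_ (tendsto_const_div_atTop_nhds_zero_nat (K : ℝ))
  filter_upwards [eventually_ne_atTop 0] with n hn
  have hsplit : ∑ l ∈ range n, ∫ t in (l / n : ℝ)..((l + 1 : ℕ) / n), g t
      = ∫ t in (0 : ℝ)..1, g t := by
    rw [intervalIntegral.sum_integral_adjacent_intervals fun l hl =>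
      (hg.continuousOn.mono (uIcc_subset_Icc (natCast_div_mem_Icc hl.le)
        (natCast_div_mem_Icc hl))).intervalIntegrable]
    simp [hn]
  calc ‖(n : ℝ)⁻¹ * ∑ l ∈ range n, g (l / n) - ∫ t in (0 : ℝ)..1, g t‖
      = ‖∑ l ∈ range n, ((n : ℝ)⁻¹ * g (l / n)
          - ∫ t in (l / n : ℝ)..((l + 1 : ℕ) / n), g t)‖ := by
        rw [← hsplit, mul_sum, sum_sub_distrib]
    _ ≤ ∑ _l ∈ range n, (K : ℝ) / n ^ 2 :=
        (norm_sum_le _ _).trans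
          (sum_le_sum fun _ hl => hg.norm_inv_mul_sub_integral_le (Finset.mem_range.1 hl))
    _ = K / n := by
        rw [sum_const, card_range, nsmul_eq_mul]
        field_simp

section

variable {E : Type*} [NormedAddCommGroup E] [NormedSpace ℝ E]

theorem norm_inv_smul_sum_smul_le {g : ℝ → ℝ} {K : ℝ≥0} (hg : LipschitzOnWith K g (Icc 0 1))
    {M : ℝ} (hM : ∀ x ∈ Icc (0 : ℝ) 1, |g x| ≤ M) (v : ℕ → E) (n : ℕ) :
    ‖(n : ℝ)⁻¹ • ∑ l ∈ range n, g (l / n) • v l‖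
      ≤ M * ‖(n : ℝ)⁻¹ • ∑ l ∈ range n, v l‖
        + K * ((n : ℝ)⁻¹ * ∑ i ∈ range n, ‖((i + 1 : ℕ) : ℝ)⁻¹ • ∑ l ∈ range (i + 1), v l‖) := by
  set T : ℕ → E := fun m => ∑ l ∈ range m, v l
  have hterm : ∀ i ∈ range (n - 1), ‖(g ((i + 1 : ℕ) / n) - g (i / n)) • T (i + 1)‖
      ≤ K * ‖((i + 1 : ℕ) : ℝ)⁻¹ • T (i + 1)‖ := by
    intro i hi
    have hi : i + 1 ≤ n := by rw [Finset.mem_range] at hi; omega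
    have hin : ((i + 1 : ℕ) : ℝ) ≤ n := by exact_mod_cast hi
    rw [norm_smul, norm_smul, ← dist_eq_norm, norm_inv, Real.norm_natCast]
    calc dist (g ((i + 1 : ℕ) / n)) (g (i / n)) * ‖T (i + 1)‖
        ≤ K / n * ‖T (i + 1)‖ := by gcongr; exact hg.dist_apply_succ_div_le hi
      _ ≤ K / ((i + 1 : ℕ) : ℝ) * ‖T (i + 1)‖ := by gcongr
      _ = _ := by ring
  rw [sum_range_by_parts (fun l => g (l / n)) v n, smul_sub]
  refine (norm_sub_le _ _).trans (add_le_add ?_ ?_)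
  · rw [smul_comm, norm_smul (g _), Real.norm_eq_abs]
    gcongr
    exact hM _ (natCast_div_mem_Icc (Nat.sub_le n 1))
  · rw [norm_smul, norm_inv, Real.norm_natCast, mul_left_comm, mul_sum]
    gcongr
    refine (norm_sum_le _ _).trans ((sum_le_sum hterm).trans ?_)
    exact sum_le_sum_of_subset_of_nonneg (range_mono (Nat.sub_le n 1)) fun _ _ _ => by positivity

theorem tendsto_inv_smul_sum_smul_of_cesaro_tendsto_zero {g : ℝ → ℝ} {K : ℝ≥0}
    (hg : LipschitzOnWith K g (Icc 0 1)) {v : ℕ → E}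
    (hv : Tendsto (fun n : ℕ => (n : ℝ)⁻¹ • ∑ l ∈ range n, v l) atTop (𝓝 0)) :
    Tendsto (fun n : ℕ => (n : ℝ)⁻¹ • ∑ l ∈ range n, g (l / n) • v l) atTop (𝓝 0) := by
  obtain ⟨M, hM⟩ := isCompact_Icc.exists_bound_of_continuousOn hg.continuousOn
  have hshift : Tendsto (fun i : ℕ => ‖((i + 1 : ℕ) : ℝ)⁻¹ • ∑ l ∈ range (i + 1), v l‖)
      atTop (𝓝 0) := by
    simpa using (hv.comp (tendsto_add_atTop_nat 1)).norm
  have hbound := ((hv.norm.const_mul M).add (hshift.cesaro.const_mul (K : ℝ)))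
  rw [norm_zero, mul_zero, mul_zero, add_zero] at hbound
  exact squeeze_zero_norm (norm_inv_smul_sum_smul_le hg hM v) hbound

theorem tendsto_inv_smul_sum_smul_of_cesaro_tendsto {g : ℝ → ℝ} {K : ℝ≥0}
    (hg : LipschitzOnWith K g (Icc 0 1)) {u : ℕ → E} {L : E}
    (hu : Tendsto (fun n : ℕ => (n : ℝ)⁻¹ • ∑ l ∈ range n, u l) atTop (𝓝 L)) :
    Tendsto (fun n : ℕ => (n : ℝ)⁻¹ • ∑ l ∈ range n, g (l / n) • u l) atTop
      (𝓝 ((∫ t in (0 : ℝ)..1, g t) • L)) := by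
  have hcentered : Tendsto (fun n : ℕ => (n : ℝ)⁻¹ • ∑ l ∈ range n, (u l - L)) atTop (𝓝 0) := by
    refine (tendsto_sub_nhds_zero_iff.2 hu).congr' ?_
    filter_upwards [eventually_ne_atTop 0] with n hn
    rw [sum_sub_distrib, sum_const, card_range, smul_sub, ← Nat.cast_smul_eq_nsmul ℝ, smul_smul,
      inv_mul_cancel₀ (Nat.cast_ne_zero.2 hn), one_smul]
  have hsum := (tendsto_inv_smul_sum_smul_of_cesaro_tendsto_zero hg hcentered).add
    (hg.tendsto_riemannSum.smul_const L)
  rw [zero_add] at hsum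
  refine hsum.congr fun n => ?_
  simp only [smul_sub, sum_sub_distrib, ← sum_smul, mul_smul, sub_add_cancel]

end

-- Any norm on matrices will do: they all induce the product topology of the statement.
attribute [local instance] Matrix.normedAddCommGroup Matrix.normedSpace

/-- If the Cesàro means of a sequence of `d × d` complex matrices converge to `L` and `g` is a
`C¹` real function, then `(1/n) ∑_{l<n} g(l/n) • u_l` converges to `(∫_0^1 g) • L`. -/
theorem statement2 {d : ℕ} (u : ℕ → Matrix (Fin d) (Fin d) ℂ) (L : Matrix (Fin d) (Fin d) ℂ)
    (hCesaro : Tendsto (fun n : ℕ => ((n : ℂ)⁻¹) • ∑ l ∈ Finset.range n, u l)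
      atTop (𝓝 L))
    (g : ℝ → ℝ) (hg : ContDiff ℝ 1 g) :
    Tendsto
      (fun n : ℕ => ((n : ℝ)⁻¹) • ∑ l ∈ Finset.range n, g ((l : ℝ) / n) • u l)
      atTop (𝓝 ((∫ t in (0:ℝ)..1, g t) • L)) := by
  obtain ⟨K, hK⟩ :=
    hg.contDiffOn.exists_lipschitzOnWith one_ne_zero (convex_Icc 0 1) isCompact_Icc
  refine tendsto_inv_smul_sum_smul_of_cesaro_tendsto hK (hCesaro.congr fun n => ?_)
  rw [← Complex.coe_smul, Complex.ofReal_inv, Complex.ofReal_natCast]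
end

section
/- Let (A_n) be a sequence of d×d complex matrices such that the Cesàro means (1/n)·Σ_{k=0}^{n-1} A_k converge to a matrix A, and such that ((1/n)·Σ_{k=0}^{n} ‖A_k‖)_{n≥1} is bounded for a fixed submultiplicative matrix norm ‖·‖. Then for every fixed positive integer k, the normalized elementary symmetric sums of order k satisfy: (1/n^k)·Σ_{0 ≤ i_1 < i_2 < ⋯ < i_k ≤ n−1} A_{i_1}A_{i_2}⋯A_{i_k} converges, as n → ∞, to A^k / k!. -/
/-!
Splitting the index sets by their largest element gives
`e_{k+1}(n) = ∑_{m<n} e_k(m) A_m` for the ordered elementary sums `e_k`, so by induction on `k`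
it suffices to show: if `B_m = m^k L + o(m^k)`, then
`∑_{m<n} B_m A_m = n^{k+1}/(k+1) • L A + o(n^{k+1})`.
The error `B_m - m^k L` contributes `o(n^{k+1})` because `∑_{m<n} ‖A_m‖ = O(n)`;
Abel summation turns `∑_{m<n} (A_m - A) = o(n)` into `∑_{m<n} m^k (A_m - A) = o(n^{k+1})`;
and `∑_{m<n} m^k = n^{k+1}/(k+1) + O(n^k)` by comparison with `∫₀ⁿ x^k dx`.
-/

open Filter Topology

attribute [local instance] Matrix.linftyOpNormedAddCommGroup Matrix.linftyOpNormedRing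

open Finset Asymptotics

theorem Finset.sort_insert_of_forall_lt {α : Type*} [LinearOrder α] {s : Finset α} {a : α}
    (h : ∀ b ∈ s, b < a) : (insert a s).sort (· ≤ ·) = s.sort (· ≤ ·) ++ [a] := by
  have ha : a ∉ s := fun has => (h a has).false
  refine List.Perm.eq_of_pairwise' (pairwise_sort _ _) ?_ ?_
  · exact List.pairwise_append.2 ⟨pairwise_sort _ _, List.pairwise_singleton _ _,
      fun b hb c hc => by
        rw [List.mem_singleton.1 hc]; exact (h b ((mem_sort _).1 hb)).le⟩
  · refine (sort_perm_toList _ _).trans ((toList_insert ha).trans ?_)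
    exact ((sort_perm_toList _ _).symm.cons a).trans (List.perm_append_singleton a _).symm

def orderedEsymm {R : Type*} [Semiring R] (A : ℕ → R) (k n : ℕ) : R :=
  ∑ s ∈ powersetCard k (range n), ((s.sort (· ≤ ·)).map A).prod

section OrderedEsymm

variable {R : Type*} [Semiring R] (A : ℕ → R)

@[simp] lemma orderedEsymm_zero (n : ℕ) : orderedEsymm A 0 n = 1 := by
  simp [orderedEsymm]

lemma orderedEsymm_succ (k n : ℕ) :
    orderedEsymm A (k + 1) n = ∑ m ∈ range n, orderedEsymm A k m * A m := by
  induction n with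
  | zero => rw [orderedEsymm, range_zero, powersetCard_eq_empty.2 (by simp), sum_empty, sum_empty]
  | succ n ih =>
    have hn : n ∉ range n := notMem_range_self
    rw [sum_range_succ, ← ih, orderedEsymm, range_add_one, powersetCard_succ_insert hn,
      sum_union, sum_image, orderedEsymm, orderedEsymm, sum_mul]
    · congr 1
      refine sum_congr rfl fun s hs => ?_
      rw [sort_insert_of_forall_lt fun b hb => mem_range.1 ((mem_powersetCard.1 hs).1 hb),
        List.map_append, List.prod_append, List.map_singleton, List.prod_singleton]
    · intro s hs t ht hst
      have hns : n ∉ s := fun h => hn ((mem_powersetCard.1 hs).1 h)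
      have hnt : n ∉ t := fun h => hn ((mem_powersetCard.1 ht).1 h)
      simpa [erase_insert hns, erase_insert hnt] using congrArg (erase · n) hst
    · refine disjoint_right.2 fun s hs hs' => hn ?_
      obtain ⟨t, -, rfl⟩ := mem_image.1 hs
      exact (mem_powersetCard.1 hs').1 (mem_insert_self n t)

end OrderedEsymm

theorem Finset.sum_range_smul_by_parts {R M : Type*} [Ring R] [AddCommGroup M] [Module R M]
    (w : ℕ → R) (b : ℕ → M) (n : ℕ) :
    ∑ m ∈ range n, w m • b m =
      w n • ∑ m ∈ range n, b m - ∑ m ∈ range n, (w (m + 1) - w m) • ∑ i ∈ range (m + 1), b i := by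
  induction n with
  | zero => simp
  | succ n ih =>
    rw [sum_range_succ, ih, sum_range_succ (fun m => (w (m + 1) - w m) • _), sum_range_succ b n]
    simp only [smul_add, sub_smul]
    abel

lemma abs_sum_range_pow_sub_le (k n : ℕ) :
    |∑ m ∈ range n, (m : ℝ) ^ k - (n : ℝ) ^ (k + 1) / (k + 1)| ≤ (n : ℝ) ^ k := by
  have hmono : MonotoneOn (fun x : ℝ => x ^ k) (Set.Icc 0 (0 + n)) :=
    fun x hx y _ hxy => pow_le_pow_left₀ hx.1 hxy k
  have hint : ∫ x in (0 : ℝ)..n, x ^ k = (n : ℝ) ^ (k + 1) / (k + 1) := by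
    simp [integral_pow]
  have hlow := hmono.sum_le_integral
  have hup := hmono.integral_le_sum
  simp only [zero_add] at hlow hup
  rw [hint] at hlow hup
  have hshift :
      ∑ i ∈ range n, ((i + 1 : ℕ) : ℝ) ^ k ≤ ∑ m ∈ range n, (m : ℝ) ^ k + (n : ℝ) ^ k := by
    rw [← sum_range_succ, sum_range_succ']
    exact le_add_of_nonneg_right (by positivity)
  rw [abs_le]
  constructor <;> linarith

lemma isBigO_natCast_pow_pow_of_le {p q : ℕ} (hpq : p ≤ q) :
    (fun n : ℕ => (n : ℝ) ^ p) =O[atTop] fun n => (n : ℝ) ^ q := by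
  refine IsBigO.of_bound' (eventually_ge_atTop 1 |>.mono fun n hn => ?_)
  simp only [norm_pow, Real.norm_natCast]
  exact pow_le_pow_right₀ (by exact_mod_cast hn) hpq

lemma isLittleO_natCast_pow_pow_of_lt {p q : ℕ} (hpq : p < q) :
    (fun n : ℕ => (n : ℝ) ^ p) =o[atTop] fun n => (n : ℝ) ^ q :=
  (isLittleO_pow_pow_atTop_of_lt (𝕜 := ℝ) hpq).comp_tendsto tendsto_natCast_atTop_atTop

/-- `Asymptotics.IsLittleO.sum_range` needs `∑ g → ∞`; comparing `f` with `g + 1` supplies it. -/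
theorem Asymptotics.IsLittleO.sum_range_of_isBigO {E : Type*} [NormedAddCommGroup E]
    {f : ℕ → E} {g G : ℕ → ℝ} (hf : f =o[atTop] g) (hg : ∀ i, 0 ≤ g i)
    (hgG : (fun n => ∑ i ∈ range n, g i) =O[atTop] G)
    (hG : (fun n : ℕ => (n : ℝ)) =O[atTop] G) :
    (fun n => ∑ i ∈ range n, f i) =o[atTop] G := by
  have hsum : ∀ n, ∑ i ∈ range n, (g i + 1) = ∑ i ∈ range n, g i + n := fun n => by
    simp [sum_add_distrib]
  have hf' : f =o[atTop] fun i => g i + 1 := hf.trans_isBigO <| IsBigO.of_bound' <|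
    Eventually.of_forall fun i => by
      rw [Real.norm_of_nonneg (hg i), Real.norm_of_nonneg (by linarith [hg i])]
      linarith
  have htop : Tendsto (fun n => ∑ i ∈ range n, (g i + 1)) atTop atTop := by
    refine tendsto_atTop_mono (fun n => ?_) tendsto_natCast_atTop_atTop
    rw [hsum]
    linarith [sum_nonneg fun i (_ : i ∈ range n) => hg i]
  refine (hf'.sum_range (fun i => add_nonneg (hg i) zero_le_one) htop).trans_isBigO ?_
  simpa only [hsum] using hgG.add hG

theorem isLittleO_sum_range_mul {R : Type*} [NormedRing R] {D A : ℕ → R} {k : ℕ}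
    (hD : D =o[atTop] fun m => (m : ℝ) ^ k)
    (hA : (fun n => ∑ m ∈ range n, ‖A m‖) =O[atTop] fun n => (n : ℝ)) :
    (fun n => ∑ m ∈ range n, D m * A m) =o[atTop] fun n => (n : ℝ) ^ (k + 1) := by
  refine (hD.mul_isBigO (isBigO_norm_right.2 (isBigO_refl A atTop))).sum_range_of_isBigO
    (fun m => by positivity) ?_ (by simpa using isBigO_natCast_pow_pow_of_le k.succ_pos)
  have hle : (fun n => ∑ m ∈ range n, (m : ℝ) ^ k * ‖A m‖) =O[atTop]
      fun n => (n : ℝ) ^ k * ∑ m ∈ range n, ‖A m‖ := by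
    refine IsBigO.of_bound' (Eventually.of_forall fun n => ?_)
    rw [Real.norm_of_nonneg (by positivity), Real.norm_of_nonneg (by positivity), mul_sum]
    exact sum_le_sum fun m hm => by gcongr; exact (mem_range.1 hm).le
  simpa only [pow_succ] using hle.trans ((isBigO_refl _ _).mul hA)

section RCLike

variable {𝕜 E : Type*} [RCLike 𝕜] [NormedAddCommGroup E] [NormedSpace 𝕜 E]

lemma norm_natCast_succ_pow_sub_pow (k m : ℕ) :
    ‖((m + 1 : ℕ) : 𝕜) ^ k - (m : 𝕜) ^ k‖ = ((m + 1 : ℕ) : ℝ) ^ k - (m : ℝ) ^ k := by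
  have hle : (m : ℝ) ^ k ≤ ((m + 1 : ℕ) : ℝ) ^ k := by gcongr; omega
  rw [← sub_nonneg] at hle
  rw [← abs_of_nonneg hle, ← RCLike.norm_ofReal (K := 𝕜)]
  push_cast
  rfl

theorem isLittleO_sum_range_pow_smul {b : ℕ → E}
    (hb : (fun n => ∑ m ∈ range n, b m) =o[atTop] fun n => (n : ℝ)) (k : ℕ) :
    (fun n => ∑ m ∈ range n, (m : 𝕜) ^ k • b m) =o[atTop] fun n => (n : ℝ) ^ (k + 1) := by
  have hpow : (fun n : ℕ => (n : 𝕜) ^ k) =O[atTop] fun n => (n : ℝ) ^ k :=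
    IsBigO.of_bound' (Eventually.of_forall fun n => by simp)
  refine (IsLittleO.sub ?_ ?_).congr_left fun n => (sum_range_smul_by_parts _ b n).symm
  · simpa only [smul_eq_mul, ← pow_succ] using hpow.smul_isLittleO hb
  have hδ : (fun m : ℕ => ((m + 1 : ℕ) : 𝕜) ^ k - (m : 𝕜) ^ k) =O[atTop]
      fun m => ((m + 1 : ℕ) : ℝ) ^ k - (m : ℝ) ^ k :=
    IsBigO.of_bound' (Eventually.of_forall fun m => by
      rw [norm_natCast_succ_pow_sub_pow, Real.norm_eq_abs]; exact le_abs_self _)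
  have hT : (fun m => ∑ i ∈ range (m + 1), b i) =o[atTop] fun m => ((m + 1 : ℕ) : ℝ) :=
    hb.comp_tendsto (tendsto_add_atTop_nat 1)
  -- compare with `(m + 1) ^ (k + 1) - m ^ (k + 1)`, whose partial sums telescope to `n ^ (k + 1)`
  have hg : ∀ m : ℕ, 0 ≤ ((m + 1 : ℕ) : ℝ) ^ (k + 1) - (m : ℝ) ^ (k + 1) := fun m => by
    rw [sub_nonneg]; gcongr; omega
  refine IsLittleO.sum_range_of_isBigO ((hδ.smul_isLittleO hT).trans_isBigO ?_) hg ?_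
    (by simpa using isBigO_natCast_pow_pow_of_le k.succ_pos)
  · refine IsBigO.of_bound' (Eventually.of_forall fun m => ?_)
    have hm : (0 : ℝ) ≤ (m : ℝ) ^ k := by positivity
    rw [Real.norm_of_nonneg (hg m), smul_eq_mul, norm_mul, Real.norm_natCast, Real.norm_eq_abs,
      abs_of_nonneg (by rw [sub_nonneg]; gcongr; omega), pow_succ, pow_succ]
    push_cast
    nlinarith
  · simp only [sum_range_sub fun m => (m : ℝ) ^ (k + 1), Nat.cast_zero, ne_eq,
      Nat.add_one_ne_zero, not_false_eq_true, zero_pow, sub_zero]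
    exact isBigO_refl _ _

theorem tendsto_inv_pow_smul_iff_isLittleO {f : ℕ → E} {L : E} {k : ℕ} :
    Tendsto (fun n : ℕ => ((n : 𝕜) ^ k)⁻¹ • f n) atTop (𝓝 L) ↔
      (fun n : ℕ => f n - (n : 𝕜) ^ k • L) =o[atTop] fun n : ℕ => (n : ℝ) ^ k := by
  have hnorm : (fun n : ℕ => ‖(n : 𝕜) ^ k‖) = fun n : ℕ => (n : ℝ) ^ k := by
    funext n; simp
  have hne : ∀ᶠ n : ℕ in atTop, (n : 𝕜) ^ k ≠ 0 :=
    eventually_ge_atTop 1 |>.mono fun n hn => pow_ne_zero _ (Nat.cast_ne_zero.2 (by omega))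
  rw [← hnorm, isLittleO_norm_right, ← isLittleOTVS_iff_isLittleO (𝕜 := 𝕜),
    isLittleOTVS_iff_tendsto_inv_smul (hne.mono fun n hn h => (hn h).elim),
    ← tendsto_sub_nhds_zero_iff]
  refine tendsto_congr' (hne.mono fun n hn => ?_)
  simp only [smul_sub, inv_smul_smul₀ hn]

variable {R : Type*} [NormedRing R] [NormedAlgebra 𝕜 R]

theorem tendsto_inv_pow_smul_sum_range_mul {B A : ℕ → R} {L Alim : R} {k : ℕ}
    (hB : Tendsto (fun m : ℕ => ((m : 𝕜) ^ k)⁻¹ • B m) atTop (𝓝 L))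
    (hA : Tendsto (fun n : ℕ => (n : 𝕜)⁻¹ • ∑ m ∈ range n, A m) atTop (𝓝 Alim))
    (hAbdd : (fun n => ∑ m ∈ range n, ‖A m‖) =O[atTop] fun n => (n : ℝ)) :
    Tendsto (fun n : ℕ => ((n : 𝕜) ^ (k + 1))⁻¹ • ∑ m ∈ range n, B m * A m) atTop
      (𝓝 (((k : 𝕜) + 1)⁻¹ • (L * Alim))) := by
  rw [tendsto_inv_pow_smul_iff_isLittleO] at hB ⊢
  have hA' : (fun n => ∑ m ∈ range n, (A m - Alim)) =o[atTop] fun n => (n : ℝ) := by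
    have := tendsto_inv_pow_smul_iff_isLittleO (k := 1).1 (by simpa only [pow_one] using hA)
    simpa [sum_sub_distrib, Nat.cast_smul_eq_nsmul] using this
  have hpow : (fun n : ℕ => ∑ m ∈ range n, (m : 𝕜) ^ k - (n : 𝕜) ^ (k + 1) / (k + 1))
      =o[atTop] fun n => (n : ℝ) ^ (k + 1) := by
    refine IsBigO.trans_isLittleO (IsBigO.of_bound' (Eventually.of_forall fun n => ?_))
      (isLittleO_natCast_pow_pow_of_lt k.lt_succ_self)
    have h := abs_sum_range_pow_sub_le k n
    rw [← RCLike.norm_ofReal (K := 𝕜)] at h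
    push_cast at h
    simpa using h
  have hpow' := hpow.smul_isBigO (isBigO_const_const (L * Alim) (one_ne_zero (α := ℝ)) atTop)
  simp only [smul_eq_mul, mul_one] at hpow'
  have hmain := (isLittleO_sum_range_pow_smul (𝕜 := 𝕜) hA' k).const_mul_left L
  refine (((isLittleO_sum_range_mul hB hAbdd).add hmain).add hpow').congr_left fun n => ?_
  simp only [sub_mul, mul_sub, smul_sub, smul_mul_assoc, mul_smul_comm, mul_sum, sum_sub_distrib,
    sub_smul, sum_smul, smul_smul, div_eq_mul_inv]
  abel

theorem tendsto_inv_pow_smul_orderedEsymm {A : ℕ → R} {Alim : R}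
    (hA : Tendsto (fun n : ℕ => (n : 𝕜)⁻¹ • ∑ m ∈ range n, A m) atTop (𝓝 Alim))
    (hAbdd : (fun n => ∑ m ∈ range n, ‖A m‖) =O[atTop] fun n => (n : ℝ)) (k : ℕ) :
    Tendsto (fun n : ℕ => ((n : 𝕜) ^ k)⁻¹ • orderedEsymm A k n) atTop
      (𝓝 ((k.factorial : 𝕜)⁻¹ • Alim ^ k)) := by
  induction k with
  | zero => simp
  | succ k ih =>
    simp_rw [orderedEsymm_succ]
    convert tendsto_inv_pow_smul_sum_range_mul ih hA hAbdd using 2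
    rw [smul_mul_assoc, ← pow_succ, smul_smul, Nat.factorial_succ, Nat.cast_mul, mul_inv,
      Nat.cast_succ]

end RCLike

attribute [local instance] Matrix.linftyOpNormedAlgebra

theorem statement6_general {d : ℕ} (A : ℕ → Matrix (Fin d) (Fin d) ℂ) (Alim : Matrix (Fin d) (Fin d) ℂ)
    (hCesaro : Tendsto (fun n : ℕ => ((n : ℂ)⁻¹) • ∑ k ∈ Finset.range n, A k)
      atTop (𝓝 Alim))
    (α : ℝ)
    (hBdd : ∀ n : ℕ, 1 ≤ n → (n : ℝ)⁻¹ * ∑ k ∈ Finset.range (n + 1), ‖A k‖ ≤ α)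
    (k : ℕ) :
    Tendsto
      (fun n : ℕ =>
        (((n : ℂ) ^ k)⁻¹) •
          ∑ s ∈ Finset.powersetCard k (Finset.range n), ((s.sort (· ≤ ·)).map A).prod)
      atTop (𝓝 (((k.factorial : ℂ))⁻¹ • Alim ^ k)) := by
  have hAbdd : (fun n => ∑ m ∈ range n, ‖A m‖) =O[atTop] fun n => (n : ℝ) := by
    refine IsBigO.of_bound α (eventually_ge_atTop 1 |>.mono fun n hn => ?_)
    have h := hBdd n hn
    rw [inv_mul_le_iff₀ (by positivity), sum_range_succ] at h
    rw [Real.norm_of_nonneg (sum_nonneg fun _ _ => norm_nonneg _), Real.norm_natCast]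
    linarith [norm_nonneg (A n)]
  exact tendsto_inv_pow_smul_orderedEsymm hCesaro hAbdd k

/-- Under the hypotheses of the main theorem, the normalized elementary symmetric sums of
order `k` of the matrices converge to `A^k / k!`. -/
theorem statement6 {d : ℕ} (A : ℕ → Matrix (Fin d) (Fin d) ℂ) (Alim : Matrix (Fin d) (Fin d) ℂ)
    (hCesaro : Tendsto (fun n : ℕ => ((n : ℂ)⁻¹) • ∑ k ∈ Finset.range n, A k)
      atTop (𝓝 Alim))
    (α : ℝ)
    (hBdd : ∀ n : ℕ, 1 ≤ n → (n : ℝ)⁻¹ * ∑ k ∈ Finset.range (n + 1), ‖A k‖ ≤ α)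
    (k : ℕ) (hk : 0 < k) :
    Tendsto
      (fun n : ℕ =>
        (((n : ℂ) ^ k)⁻¹) •
          ∑ s ∈ Finset.powersetCard k (Finset.range n), ((s.sort (· ≤ ·)).map A).prod)
      atTop (𝓝 (((k.factorial : ℂ))⁻¹ • Alim ^ k)) :=
  statement6_general A Alim hCesaro α hBdd k
end

section
/- Let (A_n) be a sequence of d×d complex matrices such that ((1/n)·Σ_{k=0}^{n} ‖A_k‖)_{n≥1} is bounded above by α for a fixed submultiplicative matrix norm ‖·‖ with ‖I_d‖ ≤ 1. Then for every complex t, every positive integer n and every 0 ≤ k ≤ n+1, the k-th term of the expansion of the product satisfies ‖(t/n)^k · Σ_{0 ≤ i_1 < ⋯ < i_k ≤ n} A_{i_1}⋯A_{i_k}‖ ≤ |t|^k α^k / k!; in particular ‖(I_d + (t/n)A_0)⋯(I_d + (t/n)A_n)‖ ≤ Σ_{k≥0} |t|^k α^k / k! = e^{|t|α}, uniformly in n. -/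
attribute [local instance] Matrix.linftyOpNormedAddCommGroup Matrix.linftyOpNormedRing

attribute [local instance] Matrix.linftyOpNormedSpace

open Finset

lemma esymm_step (f : ℕ → ℝ) (hf : ∀ i, 0 ≤ f i) (u : Finset ℕ) (k : ℕ) :
    ((k + 1 : ℕ) : ℝ) * ∑ s ∈ powersetCard (k + 1) u, ∏ i ∈ s, f i ≤
      (∑ i ∈ u, f i) * ∑ s ∈ powersetCard k u, ∏ i ∈ s, f i := by
  rw [mul_sum, mul_sum]
  have h1 : ∀ s ∈ powersetCard (k + 1) u,
      ((k + 1 : ℕ) : ℝ) * ∏ i ∈ s, f i = ∑ i ∈ s, f i * ∏ j ∈ s.erase i, f j := by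
    intro s hs
    obtain ⟨hsu, hcard⟩ := mem_powersetCard.mp hs
    calc ((k + 1 : ℕ) : ℝ) * ∏ i ∈ s, f i = ∑ _i ∈ s, ∏ j ∈ s, f j := by
          rw [sum_const, hcard, nsmul_eq_mul]
      _ = ∑ i ∈ s, f i * ∏ j ∈ s.erase i, f j :=
          Finset.sum_congr rfl fun i hi => (Finset.mul_prod_erase s f hi).symm
  rw [Finset.sum_congr rfl h1]
  have h2 : ∑ s ∈ powersetCard (k + 1) u, ∑ i ∈ s, f i * ∏ j ∈ s.erase i, f j
      = ∑ p ∈ (powersetCard k u).sigma (fun t => u \ t), f p.2 * ∏ j ∈ p.1, f j := by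
    rw [Finset.sum_sigma']
    refine Finset.sum_nbij' (fun p => ⟨p.1.erase p.2, p.2⟩) (fun p => ⟨insert p.2 p.1, p.2⟩)
      ?_ ?_ ?_ ?_ ?_
    · rintro ⟨s, i⟩ hp
      simp only [mem_sigma, mem_powersetCard, mem_sdiff] at hp ⊢
      obtain ⟨⟨hsu, hc⟩, hi⟩ := hp
      exact ⟨⟨(erase_subset _ _).trans hsu, by rw [card_erase_of_mem hi, hc]; rfl⟩,
        hsu hi, notMem_erase _ _⟩
    · rintro ⟨tt, i⟩ hp
      simp only [mem_sigma, mem_powersetCard, mem_sdiff] at hp ⊢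
      obtain ⟨⟨htu, hc⟩, hiu, hit⟩ := hp
      exact ⟨⟨insert_subset hiu htu, by rw [card_insert_of_notMem hit, hc]⟩,
        mem_insert_self _ _⟩
    · rintro ⟨s, i⟩ hp
      simp only [mem_sigma] at hp
      simp [Finset.insert_erase hp.2]
    · rintro ⟨tt, i⟩ hp
      simp only [mem_sigma, mem_powersetCard, mem_sdiff] at hp
      simp [Finset.erase_insert hp.2.2]
    · rintro ⟨s, i⟩ _; rfl
  rw [h2, Finset.sum_sigma]
  refine Finset.sum_le_sum fun tt ht => ?_
  rw [Finset.sum_mul]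
  refine Finset.sum_le_sum_of_subset_of_nonneg (sdiff_subset) fun i _ _ =>
    mul_nonneg (hf i) (Finset.prod_nonneg fun j _ => hf j)

lemma esymm_le (f : ℕ → ℝ) (hf : ∀ i, 0 ≤ f i) (u : Finset ℕ) :
    ∀ k : ℕ, (k.factorial : ℝ) * ∑ s ∈ powersetCard k u, ∏ i ∈ s, f i ≤ (∑ i ∈ u, f i) ^ k
  | 0 => by simp
  | (k + 1) => by
    have hT : 0 ≤ ∑ i ∈ u, f i := Finset.sum_nonneg fun i _ => hf i
    have hfac : (0 : ℝ) ≤ (k.factorial : ℝ) := Nat.cast_nonneg _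
    calc ((k + 1).factorial : ℝ) * ∑ s ∈ powersetCard (k + 1) u, ∏ i ∈ s, f i
        = (k.factorial : ℝ) * (((k + 1 : ℕ) : ℝ) * ∑ s ∈ powersetCard (k + 1) u, ∏ i ∈ s, f i) := by
          rw [Nat.factorial_succ]; push_cast; ring
      _ ≤ (k.factorial : ℝ) * ((∑ i ∈ u, f i) * ∑ s ∈ powersetCard k u, ∏ i ∈ s, f i) :=
          mul_le_mul_of_nonneg_left (esymm_step f hf u k) hfac
      _ = (∑ i ∈ u, f i) * ((k.factorial : ℝ) * ∑ s ∈ powersetCard k u, ∏ i ∈ s, f i) := by ring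
      _ ≤ (∑ i ∈ u, f i) * (∑ i ∈ u, f i) ^ k :=
          mul_le_mul_of_nonneg_left (esymm_le f hf u k) hT
      _ = (∑ i ∈ u, f i) ^ (k + 1) := by ring

set_option synthInstance.maxHeartbeats 1000000 in
lemma norm_one_le_mat {d : ℕ} : ‖(1 : Matrix (Fin d) (Fin d) ℂ)‖ ≤ 1 := by
  rcases Nat.eq_zero_or_pos d with h | h
  · subst h
    have : (1 : Matrix (Fin 0) (Fin 0) ℂ) = 0 := Subsingleton.elim _ _
    rw [this, norm_zero]; norm_num
  · haveI : Nonempty (Fin d) := Fin.pos_iff_nonempty.mp h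
    exact le_of_eq (Matrix.linfty_opNormOneClass (n := Fin d) (α := ℂ)).norm_one

lemma norm_list_prod_le_mat {d : ℕ} (B : ℕ → Matrix (Fin d) (Fin d) ℂ) :
    ∀ l : List ℕ, ‖(l.map B).prod‖ ≤ (l.map fun i => ‖B i‖).prod
  | [] => by
    simp only [List.map_nil, List.prod_nil]
    exact norm_one_le_mat
  | (a :: l) => by
    simp only [List.map_cons, List.prod_cons]
    calc ‖B a * (l.map B).prod‖ ≤ ‖B a‖ * ‖(l.map B).prod‖ := norm_mul_le _ _
      _ ≤ ‖B a‖ * (l.map fun i => ‖B i‖).prod :=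
          mul_le_mul_of_nonneg_left (norm_list_prod_le_mat B l) (norm_nonneg _)

lemma sort_map_prod (f : ℕ → ℝ) (s : Finset ℕ) :
    ((s.sort (· ≤ ·)).map f).prod = ∏ i ∈ s, f i := by
  rw [List.Perm.prod_eq (List.Perm.map f (Finset.sort_perm_toList (s := s) (r := (· ≤ ·)))), Finset.prod_map_toList]


/-- If the Cesàro means of the norms `‖Aₖ‖` are bounded by `α` (for the submultiplicative
`L∞`-operator norm, for which `‖I‖ ≤ 1`), then each term of the expansion of
`(I + (t/n) A₀) ⋯ (I + (t/n) Aₙ)` satisfies `‖(t/n)^k ∑ A_{i₁} ⋯ A_{i_k}‖ ≤ |t|^k α^k / k!`,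
and the product itself is bounded in norm by `e^{|t| α}`, uniformly in `n`. -/
theorem statement12 {d : ℕ} (A : ℕ → Matrix (Fin d) (Fin d) ℂ) (α : ℝ)
    (hBdd : ∀ n : ℕ, 1 ≤ n → (n : ℝ)⁻¹ * ∑ k ∈ Finset.range (n + 1), ‖A k‖ ≤ α)
    (t : ℂ) (n : ℕ) (hn : 0 < n) :
    (∀ k ≤ n + 1,
      ‖(t / n) ^ k •
          ∑ s ∈ Finset.powersetCard k (Finset.range (n + 1)), ((s.sort (· ≤ ·)).map A).prod‖ ≤
        ‖t‖ ^ k * α ^ k / (k.factorial : ℝ)) ∧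
    ‖((List.range (n + 1)).map
        (fun i => (1 : Matrix (Fin d) (Fin d) ℂ) + (t / n) • A i)).prod‖ ≤
      Real.exp (‖t‖ * α) := by
  have hn' : (0 : ℝ) < (n : ℝ) := Nat.cast_pos.mpr hn
  have hsum0 : (0 : ℝ) ≤ ∑ k ∈ Finset.range (n + 1), ‖A k‖ :=
    Finset.sum_nonneg fun i _ => norm_nonneg _
  have hα : 0 ≤ α :=
    le_trans (mul_nonneg (inv_nonneg.mpr hn'.le) hsum0) (hBdd n hn)
  have hsum : ∑ k ∈ Finset.range (n + 1), ‖A k‖ ≤ (n : ℝ) * α := by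
    have h := hBdd n hn
    rw [inv_mul_le_iff₀ hn'] at h
    exact h
  have hcoef : ‖t / (n : ℂ)‖ = ‖t‖ / (n : ℝ) := by
    rw [norm_div, Complex.norm_natCast]
  constructor
  · intro k hk
    rw [norm_smul, norm_pow, hcoef, div_pow]
    have h1 : ‖∑ s ∈ Finset.powersetCard k (Finset.range (n + 1)),
        ((s.sort (· ≤ ·)).map A).prod‖ ≤
        ∑ s ∈ Finset.powersetCard k (Finset.range (n + 1)), ∏ i ∈ s, ‖A i‖ := by
      refine (norm_sum_le _ _).trans (Finset.sum_le_sum fun s _ => ?_)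
      exact (norm_list_prod_le_mat A _).trans_eq (sort_map_prod _ s)
    have h2 : ∑ s ∈ Finset.powersetCard k (Finset.range (n + 1)), ∏ i ∈ s, ‖A i‖ ≤
        ((n : ℝ) * α) ^ k / (k.factorial : ℝ) := by
      rw [le_div_iff₀ (by positivity)]
      calc (∑ s ∈ Finset.powersetCard k (Finset.range (n + 1)), ∏ i ∈ s, ‖A i‖) *
            (k.factorial : ℝ)
          = (k.factorial : ℝ) *
            ∑ s ∈ Finset.powersetCard k (Finset.range (n + 1)), ∏ i ∈ s, ‖A i‖ := by ring
        _ ≤ (∑ i ∈ Finset.range (n + 1), ‖A i‖) ^ k :=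
            esymm_le (fun i => ‖A i‖) (fun i => norm_nonneg _) _ k
        _ ≤ ((n : ℝ) * α) ^ k := pow_le_pow_left₀ hsum0 hsum k
    calc ‖t‖ ^ k / (n : ℝ) ^ k * ‖∑ s ∈ Finset.powersetCard k (Finset.range (n + 1)),
          ((s.sort (· ≤ ·)).map A).prod‖
        ≤ ‖t‖ ^ k / (n : ℝ) ^ k * (((n : ℝ) * α) ^ k / (k.factorial : ℝ)) := by
          refine mul_le_mul_of_nonneg_left (h1.trans h2) (by positivity)
      _ = ‖t‖ ^ k * α ^ k / (k.factorial : ℝ) := by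
          rw [mul_pow]
          field_simp
  · have key : ∀ i : ℕ, ‖(1 : Matrix (Fin d) (Fin d) ℂ) + (t / n) • A i‖ ≤
        Real.exp (‖t‖ / (n : ℝ) * ‖A i‖) := by
      intro i
      have h1 : ‖(1 : Matrix (Fin d) (Fin d) ℂ) + (t / n) • A i‖ ≤
          1 + ‖t‖ / (n : ℝ) * ‖A i‖ := by
        refine (norm_add_le _ _).trans ?_
        rw [norm_smul, hcoef]
        exact add_le_add_left norm_one_le_mat _
      refine h1.trans ?_
      have := Real.add_one_le_exp (‖t‖ / (n : ℝ) * ‖A i‖)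
      linarith
    calc ‖((List.range (n + 1)).map
          (fun i => (1 : Matrix (Fin d) (Fin d) ℂ) + (t / n) • A i)).prod‖
        ≤ ((List.range (n + 1)).map
            fun i => ‖(1 : Matrix (Fin d) (Fin d) ℂ) + (t / n) • A i‖).prod :=
          norm_list_prod_le_mat _ _
      _ = ∏ i ∈ Finset.range (n + 1), ‖(1 : Matrix (Fin d) (Fin d) ℂ) + (t / n) • A i‖ := rfl
      _ ≤ ∏ i ∈ Finset.range (n + 1), Real.exp (‖t‖ / (n : ℝ) * ‖A i‖) :=
          Finset.prod_le_prod (fun i _ => norm_nonneg _) (fun i _ => key i)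
      _ = Real.exp (∑ i ∈ Finset.range (n + 1), ‖t‖ / (n : ℝ) * ‖A i‖) :=
          (Real.exp_sum _ _).symm
      _ ≤ Real.exp (‖t‖ * α) := by
          rw [Real.exp_le_exp, ← Finset.mul_sum]
          calc ‖t‖ / (n : ℝ) * ∑ i ∈ Finset.range (n + 1), ‖A i‖
              ≤ ‖t‖ / (n : ℝ) * ((n : ℝ) * α) :=
                mul_le_mul_of_nonneg_left hsum (by positivity)
            _ = ‖t‖ * α := by field_simp
end
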